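/- For all X, Y, Z ∈ ℝ⁸ one has |P(X,Y,Z)| ≤ |X|·|Y|·|Z|. Moreover, if |X|² + |Y|² + |Z|² = 1 then |X|·|Y|·|Z| ≤ 1/(3√3); in particular |P(a)| ≤ 1/(3√3) for every a in the unit sphere S²³ ⊂ ℝ²⁴. -/

import Mathlib

/-! `P(X,Y,Z) = Re (X·(Y·Z)) = ⟪X, W(Y,Z)⟫`, where `W(Y,Z) = octConjMul Y Z` is the conjugate of
the octonion product `Y·Z`. The octonion norm is multiplicative (Degen's eight-square identity),
so `|W(Y,Z)| = |Y|·|Z|` and the first bound is Cauchy–Schwarz. The second is AM–GM for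
`|X|², |Y|², |Z|²`, and the third combines the two, since `|a|² = |X|² + |Y|² + |Z|²` for
`a = (X,Y,Z)`. -/

open Matrix

open Polynomial in
/-- The cubic form `P(X,Y,Z) = Re((oX·oY)·oZ)` on `ℝ⁸ × ℝ⁸ × ℝ⁸`. -/
noncomputable def P3 (X Y Z : EuclideanSpace ℝ (Fin 8)) : ℝ :=
  X 0 * (Y 0 * Z 0 - Y 1 * Z 1 - Y 2 * Z 2 - Y 3 * Z 3 - Y 4 * Z 4 - Y 5 * Z 5 - Y 6 * Z 6 - Y 7 * Z 7) +
  X 1 * (-(Y 0 * Z 1) - Y 1 * Z 0 - Y 2 * Z 4 - Y 3 * Z 7 + Y 4 * Z 2 - Y 5 * Z 6 + Y 6 * Z 5 + Y 7 * Z 3) +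
  X 2 * (-(Y 0 * Z 2) + Y 1 * Z 4 - Y 2 * Z 0 - Y 3 * Z 5 - Y 4 * Z 1 + Y 5 * Z 3 - Y 6 * Z 7 + Y 7 * Z 6) +
  X 3 * (-(Y 0 * Z 3) + Y 1 * Z 7 + Y 2 * Z 5 - Y 3 * Z 0 - Y 4 * Z 6 - Y 5 * Z 2 + Y 6 * Z 4 - Y 7 * Z 1) +
  X 4 * (-(Y 0 * Z 4) - Y 1 * Z 2 + Y 2 * Z 1 + Y 3 * Z 6 - Y 4 * Z 0 - Y 5 * Z 7 - Y 6 * Z 3 + Y 7 * Z 5) +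
  X 5 * (-(Y 0 * Z 5) + Y 1 * Z 6 - Y 2 * Z 3 + Y 3 * Z 2 + Y 4 * Z 7 - Y 5 * Z 0 - Y 6 * Z 1 - Y 7 * Z 4) +
  X 6 * (-(Y 0 * Z 6) - Y 1 * Z 5 + Y 2 * Z 7 - Y 3 * Z 4 + Y 4 * Z 3 + Y 5 * Z 1 - Y 6 * Z 0 - Y 7 * Z 2) +
  X 7 * (-(Y 0 * Z 7) - Y 1 * Z 3 - Y 2 * Z 6 + Y 3 * Z 1 - Y 4 * Z 5 + Y 5 * Z 4 + Y 6 * Z 2 - Y 7 * Z 0)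

/-- The `X`-part of a vector in `ℝ²⁴ = ℝ⁸ × ℝ⁸ × ℝ⁸`. -/
noncomputable def Xpart (v : EuclideanSpace ℝ (Fin 24)) : EuclideanSpace ℝ (Fin 8) :=
  WithLp.toLp 2 (fun i : Fin 8 => v ⟨i.1, by omega⟩)

/-- The `Y`-part of a vector in `ℝ²⁴ = ℝ⁸ × ℝ⁸ × ℝ⁸`. -/
noncomputable def Ypart (v : EuclideanSpace ℝ (Fin 24)) : EuclideanSpace ℝ (Fin 8) :=
  WithLp.toLp 2 (fun i : Fin 8 => v ⟨i.1 + 8, by omega⟩)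

/-- The `Z`-part of a vector in `ℝ²⁴ = ℝ⁸ × ℝ⁸ × ℝ⁸`. -/
noncomputable def Zpart (v : EuclideanSpace ℝ (Fin 24)) : EuclideanSpace ℝ (Fin 8) :=
  WithLp.toLp 2 (fun i : Fin 8 => v ⟨i.1 + 16, by omega⟩)

/-- The octonionic triality cubic form on `ℝ²⁴`. -/
noncomputable def P24 (v : EuclideanSpace ℝ (Fin 24)) : ℝ :=
  P3 (Xpart v) (Ypart v) (Zpart v)

/-- `m(a) = |x|·|y|·|z|` for `a = (x,y,z) ∈ ℝ²⁴`. -/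
noncomputable def mval (v : EuclideanSpace ℝ (Fin 24)) : ℝ :=
  ‖Xpart v‖ * ‖Ypart v‖ * ‖Zpart v‖

/-- The Hessian matrix of `f : ℝⁿ → ℝ` at `x`. -/
noncomputable def hessianMatrix {n : ℕ} (f : EuclideanSpace ℝ (Fin n) → ℝ)
    (x : EuclideanSpace ℝ (Fin n)) : Matrix (Fin n) (Fin n) ℝ :=
  Matrix.of fun i j =>
    iteratedFDeriv ℝ 2 f x ![EuclideanSpace.single i 1, EuclideanSpace.single j 1]

/-- `lam` lists the eigenvalues of `A` in decreasing order with multiplicity. -/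
def IsEigDecreasing {n : ℕ} (A : Matrix (Fin n) (Fin n) ℝ) (lam : Fin n → ℝ) : Prop :=
  Antitone lam ∧ A.charpoly = ∏ i, (Polynomial.X - Polynomial.C (lam i))

/-- The operator norm of a matrix, acting on Euclidean space. -/
noncomputable def opNorm {n : ℕ} (A : Matrix (Fin n) (Fin n) ℝ) : ℝ :=
  ‖Matrix.toEuclideanCLM (𝕜 := ℝ) A‖

/-- `F` is uniformly elliptic with constant `C`. -/
def UniformlyElliptic {n : ℕ} (C : ℝ) (F : Matrix (Fin n) (Fin n) ℝ → ℝ) : Prop :=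
  ∀ M N : Matrix (Fin n) (Fin n) ℝ, M.IsSymm → N.PosSemidef →
    C⁻¹ * opNorm N ≤ F (M + N) - F M ∧ F (M + N) - F M ≤ C * opNorm N

/-- `u` is a viscosity solution of `G(D²u) = 0` in `Ω`. -/
def IsViscositySolution {n : ℕ} (Ω : Set (EuclideanSpace ℝ (Fin n)))
    (G : Matrix (Fin n) (Fin n) ℝ → ℝ) (u : EuclideanSpace ℝ (Fin n) → ℝ) : Prop :=
  ∀ x₀ ∈ Ω, ∀ φ : EuclideanSpace ℝ (Fin n) → ℝ, ContDiff ℝ 2 φ →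
    (IsLocalMax (fun x => u x - φ x) x₀ → 0 ≤ G (hessianMatrix φ x₀)) ∧
    (IsLocalMin (fun x => u x - φ x) x₀ → G (hessianMatrix φ x₀) ≤ 0)

noncomputable def octConjMul (Y Z : EuclideanSpace ℝ (Fin 8)) : EuclideanSpace ℝ (Fin 8) :=
  WithLp.toLp 2
    ![Y 0 * Z 0 - Y 1 * Z 1 - Y 2 * Z 2 - Y 3 * Z 3 - Y 4 * Z 4 - Y 5 * Z 5 - Y 6 * Z 6 - Y 7 * Z 7,
      -(Y 0 * Z 1) - Y 1 * Z 0 - Y 2 * Z 4 - Y 3 * Z 7 + Y 4 * Z 2 - Y 5 * Z 6 + Y 6 * Z 5 + Y 7 * Z 3,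
      -(Y 0 * Z 2) + Y 1 * Z 4 - Y 2 * Z 0 - Y 3 * Z 5 - Y 4 * Z 1 + Y 5 * Z 3 - Y 6 * Z 7 + Y 7 * Z 6,
      -(Y 0 * Z 3) + Y 1 * Z 7 + Y 2 * Z 5 - Y 3 * Z 0 - Y 4 * Z 6 - Y 5 * Z 2 + Y 6 * Z 4 - Y 7 * Z 1,
      -(Y 0 * Z 4) - Y 1 * Z 2 + Y 2 * Z 1 + Y 3 * Z 6 - Y 4 * Z 0 - Y 5 * Z 7 - Y 6 * Z 3 + Y 7 * Z 5,
      -(Y 0 * Z 5) + Y 1 * Z 6 - Y 2 * Z 3 + Y 3 * Z 2 + Y 4 * Z 7 - Y 5 * Z 0 - Y 6 * Z 1 - Y 7 * Z 4,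
      -(Y 0 * Z 6) - Y 1 * Z 5 + Y 2 * Z 7 - Y 3 * Z 4 + Y 4 * Z 3 + Y 5 * Z 1 - Y 6 * Z 0 - Y 7 * Z 2,
      -(Y 0 * Z 7) - Y 1 * Z 3 - Y 2 * Z 6 + Y 3 * Z 1 - Y 4 * Z 5 + Y 5 * Z 4 + Y 6 * Z 2 - Y 7 * Z 0]

theorem P3_eq_inner_octConjMul (X Y Z : EuclideanSpace ℝ (Fin 8)) :
    P3 X Y Z = inner ℝ X (octConjMul Y Z) := by
  simp [P3, octConjMul, PiLp.inner_apply, Fin.sum_univ_eight]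
  ring

theorem norm_sq_octConjMul (Y Z : EuclideanSpace ℝ (Fin 8)) :
    ‖octConjMul Y Z‖ ^ 2 = ‖Y‖ ^ 2 * ‖Z‖ ^ 2 := by
  simp [EuclideanSpace.norm_sq_eq, octConjMul, Fin.sum_univ_eight]
  ring

theorem norm_octConjMul (Y Z : EuclideanSpace ℝ (Fin 8)) :
    ‖octConjMul Y Z‖ = ‖Y‖ * ‖Z‖ := by
  rw [← sq_eq_sq₀ (norm_nonneg _) (by positivity), norm_sq_octConjMul, mul_pow]

theorem abs_P3_le (X Y Z : EuclideanSpace ℝ (Fin 8)) : |P3 X Y Z| ≤ ‖X‖ * ‖Y‖ * ‖Z‖ := by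
  rw [P3_eq_inner_octConjMul, mul_assoc, ← norm_octConjMul]
  exact abs_real_inner_le_norm _ _

theorem sq_mul_mul_le_cube_mean_sq (x y z : ℝ) :
    (x * y * z) ^ 2 ≤ ((x ^ 2 + y ^ 2 + z ^ 2) / 3) ^ 3 := by
  nlinarith [sq_nonneg (x ^ 2 - y ^ 2), sq_nonneg (y ^ 2 - z ^ 2), sq_nonneg (x ^ 2 - z ^ 2),
    mul_nonneg (sq_nonneg x) (sq_nonneg y), mul_nonneg (sq_nonneg y) (sq_nonneg z),
    mul_nonneg (sq_nonneg x) (sq_nonneg z)]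

theorem mul_mul_le_of_sq_add_sq_add_sq_eq_one {x y z : ℝ} (h : x ^ 2 + y ^ 2 + z ^ 2 = 1) :
    x * y * z ≤ 1 / (3 * Real.sqrt 3) := by
  have hbound : (1 / (3 * Real.sqrt 3)) ^ 2 = (1 / 3) ^ 3 := by
    rw [div_pow, mul_pow, Real.sq_sqrt (by norm_num)]
    norm_num
  refine (le_abs_self _).trans (abs_le_of_sq_le_sq ?_ (by positivity))
  calc (x * y * z) ^ 2 ≤ ((x ^ 2 + y ^ 2 + z ^ 2) / 3) ^ 3 := sq_mul_mul_le_cube_mean_sq x y z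
    _ = (1 / (3 * Real.sqrt 3)) ^ 2 := by rw [h, hbound]

theorem norm_sq_eq_Xpart_add_Ypart_add_Zpart (a : EuclideanSpace ℝ (Fin 24)) :
    ‖a‖ ^ 2 = ‖Xpart a‖ ^ 2 + ‖Ypart a‖ ^ 2 + ‖Zpart a‖ ^ 2 := by
  simp only [EuclideanSpace.norm_sq_eq, Xpart, Ypart, Zpart]
  rw [show (∑ i : Fin 24, ‖a i‖ ^ 2) = ∑ i : Fin (8 + 8 + 8), ‖a i‖ ^ 2 from rfl,
    Fin.sum_univ_add, Fin.sum_univ_add]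
  simp only [Fin.natAdd_eq_addNat]
  rfl

open Real in
/-- `|P(X,Y,Z)| ≤ |X|·|Y|·|Z|` for all `X, Y, Z ∈ ℝ⁸`; moreover if
`|X|² + |Y|² + |Z|² = 1` then `|X|·|Y|·|Z| ≤ 1/(3√3)`, so `|P(a)| ≤ 1/(3√3)` on the
unit sphere `S²³ ⊂ ℝ²⁴`. -/
theorem P_bounds :
    (∀ X Y Z : EuclideanSpace ℝ (Fin 8), |P3 X Y Z| ≤ ‖X‖ * ‖Y‖ * ‖Z‖) ∧
    (∀ X Y Z : EuclideanSpace ℝ (Fin 8), ‖X‖ ^ 2 + ‖Y‖ ^ 2 + ‖Z‖ ^ 2 = 1 →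
      ‖X‖ * ‖Y‖ * ‖Z‖ ≤ 1 / (3 * sqrt 3)) ∧
    (∀ a : EuclideanSpace ℝ (Fin 24), ‖a‖ = 1 → |P24 a| ≤ 1 / (3 * sqrt 3)) := by
  refine ⟨abs_P3_le, fun X Y Z h => mul_mul_le_of_sq_add_sq_add_sq_eq_one h, fun a ha => ?_⟩
  have hparts : ‖Xpart a‖ ^ 2 + ‖Ypart a‖ ^ 2 + ‖Zpart a‖ ^ 2 = 1 := by
    rw [← norm_sq_eq_Xpart_add_Ypart_add_Zpart, ha, one_pow]
  exact (abs_P3_le _ _ _).trans (mul_mul_le_of_sq_add_sq_add_sq_eq_one hparts)
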